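/- First-order approximation of the regularization operator (pointwise form of Lemma 'Approx B'): let v : ℝ × ℝ → ℝ be Y-periodic in its second variable and twice continuously differentiable in its first variable, with |∂ₓv(x, y)| and |∂ₓₓv(x, y)| ≤ M for all x, y. Then for every ε > 0 and every x ∈ ℝ, |(B_ε v)(x) − (T_ε*(v + ε·P v))(x)| ≤ M·ε², where (P v)(x, y) = y·∂ₓv(x, y); that is, B_ε v = T_ε*(v + ε y·∇ₓ v) + ε·O(ε). -/

import Mathlib

/-! Write `x = c + ε y` with `c = c_ε(x)` the centre of the cell containing `x` and
`y = y_ε(x) ∈ Y`; by periodicity `(B_ε v)(x) = f x` for `f = v(·, y)`. Expanding `f` and `f'`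
to first order around `x`, the integrand `f (c + ε z) + ε y f' (c + ε z)` of `T_ε*` equals
`f x + ε f' x · z` up to `M ε²` uniformly in `z ∈ Y`, and the linear term has mean zero on `Y`. -/

open MeasureTheory intervalIntegral Set

/-- `kEps ε x = ⌊x/ε + 1/2⌋`. -/
noncomputable def kEps (ε x : ℝ) : ℤ := ⌊x / ε + 1 / 2⌋

/-- `cEps ε x = ε · kEps ε x`. -/
noncomputable def cEps (ε x : ℝ) : ℝ := ε * (kEps ε x : ℝ)

/-- `yEps ε x = x/ε − kEps ε x`. -/
noncomputable def yEps (ε x : ℝ) : ℝ := x / ε - (kEps ε x : ℝ)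

/-- The adjoint two-scale transform `(T_ε* w)(x) = ∫_{−1/2}^{1/2} w(c_ε(x) + ε·z, y_ε(x)) dz`. -/
noncomputable def twoScaleAdj (ε : ℝ) (w : ℝ → ℝ → ℝ) (x : ℝ) : ℝ :=
  ∫ z in (-(1:ℝ)/2)..(1/2), w (cEps ε x + ε * z) (yEps ε x)

/-- The regularization operator `(B_ε w)(x) = w(x, x/ε)`. -/
noncomputable def regOp (ε : ℝ) (w : ℝ → ℝ → ℝ) (x : ℝ) : ℝ := w x (x / ε)

/-- Partial derivative with respect to the first variable. -/
noncomputable def pdx (v : ℝ → ℝ → ℝ) (x y : ℝ) : ℝ := deriv (fun t => v t y) x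

section SecondOrderBounds

variable {f : ℝ → ℝ} {M : ℝ}

theorem abs_deriv_sub_deriv_le (hf : ContDiff ℝ 2 f) (hM : ∀ t, |deriv (deriv f) t| ≤ M)
    (a b : ℝ) : |deriv f b - deriv f a| ≤ M * |b - a| := by
  have hdiff : Differentiable ℝ (deriv f) :=
    (hf.iterate_deriv' 1 1).differentiable one_ne_zero
  simpa only [Real.norm_eq_abs] using Convex.norm_image_sub_le_of_norm_deriv_le
    (fun t _ => hdiff t) (fun t _ => hM t) convex_univ (mem_univ a) (mem_univ b)

theorem abs_sub_sub_deriv_mul_le (hf : ContDiff ℝ 2 f) (hM : ∀ t, |deriv (deriv f) t| ≤ M)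
    (a b : ℝ) : |f b - f a - deriv f a * (b - a)| ≤ M / 2 * (b - a) ^ 2 := by
  rcases eq_or_ne a b with rfl | hab
  · simp
  obtain ⟨t, -, ht⟩ := taylor_mean_remainder_lagrange_iteratedDeriv (n := 1) hab hf.contDiffOn
  have htaylor : taylorWithinEval f 1 (uIcc a b) a b = f a + deriv f a * (b - a) := by
    rw [taylorWithinEval_succ, taylor_within_zero_eval, iteratedDerivWithin_one,
      (hf.differentiable two_ne_zero a).derivWithin (uniqueDiffOn_uIcc hab a left_mem_uIcc)]
    simp only [smul_eq_mul]
    ring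
  rw [htaylor, ← sub_sub, iteratedDeriv_succ, iteratedDeriv_one] at ht
  rw [ht, abs_div, abs_mul, abs_pow, sq_abs, mul_div_right_comm]
  norm_num [Nat.factorial]
  gcongr
  exact hM t

end SecondOrderBounds

theorem cEps_add_mul_yEps {ε : ℝ} (hε : ε ≠ 0) (x : ℝ) : cEps ε x + ε * yEps ε x = x := by
  rw [cEps, yEps]
  field_simp
  ring

theorem abs_yEps_le (ε x : ℝ) : |yEps ε x| ≤ 1 / 2 := by
  have hlo := Int.floor_le (x / ε + 1 / 2)
  have hhi := Int.lt_floor_add_one (x / ε + 1 / 2)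
  rw [yEps, kEps, abs_le]
  constructor <;> linarith

theorem regOp_eq_yEps {v : ℝ → ℝ → ℝ} (hper : ∀ x y, v x (y + 1) = v x y) (ε x : ℝ) :
    regOp ε v x = v x (yEps ε x) := by
  have hv : Function.Periodic (v x) 1 := hper x
  rw [regOp, yEps, ← mul_one (kEps ε x : ℝ), hv.sub_int_mul_eq]

section CellAverage

variable {f : ℝ → ℝ} {M : ℝ}

theorem abs_first_order_cell_error_le (hf : ContDiff ℝ 2 f)
    (hM : ∀ t, |deriv (deriv f) t| ≤ M) {ε y z : ℝ} (hε : 0 ≤ ε) (hy : |y| ≤ 1 / 2)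
    (hz : |z| ≤ 1 / 2) (c : ℝ) :
    |f (c + ε * y) + ε * deriv f (c + ε * y) * z
        - (f (c + ε * z) + ε * (y * deriv f (c + ε * z)))| ≤ M * ε ^ 2 := by
  have hM0 : 0 ≤ M := (abs_nonneg _).trans (hM 0)
  have hzy : |z - y| ≤ 1 := (abs_sub _ _).trans (by linarith)
  have hstep : c + ε * z - (c + ε * y) = ε * (z - y) := by ring
  have htaylor := abs_sub_sub_deriv_mul_le hf hM (c + ε * y) (c + ε * z)
  have hlip := abs_deriv_sub_deriv_le hf hM (c + ε * y) (c + ε * z)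
  rw [hstep] at htaylor hlip
  have hsplit : f (c + ε * y) + ε * deriv f (c + ε * y) * z
        - (f (c + ε * z) + ε * (y * deriv f (c + ε * z)))
      = -(f (c + ε * z) - f (c + ε * y) - deriv f (c + ε * y) * (ε * (z - y)))
        - ε * y * (deriv f (c + ε * z) - deriv f (c + ε * y)) := by ring
  have hsq : (ε * (z - y)) ^ 2 ≤ ε ^ 2 := by
    rw [mul_pow, ← sq_abs (z - y)]
    exact mul_le_of_le_one_right (sq_nonneg ε) (pow_le_one₀ (abs_nonneg _) hzy)
  have hεy : |ε * y| ≤ ε / 2 := by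
    rw [abs_mul, abs_of_nonneg hε]
    nlinarith
  have hεzy : |ε * (z - y)| ≤ ε := by
    rw [abs_mul, abs_of_nonneg hε]
    exact mul_le_of_le_one_right hε hzy
  rw [hsplit]
  calc _ ≤ |f (c + ε * z) - f (c + ε * y) - deriv f (c + ε * y) * (ε * (z - y))|
        + |ε * y| * |deriv f (c + ε * z) - deriv f (c + ε * y)| := by
        rw [← abs_mul]; exact (abs_sub _ _).trans_eq (by rw [abs_neg])
    _ ≤ M / 2 * ε ^ 2 + ε / 2 * (M * ε) := by
        gcongr
        · exact htaylor.trans (by gcongr)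
        · exact hlip.trans (by gcongr)
    _ = M * ε ^ 2 := by ring

theorem abs_sub_integral_first_order_le (hf : ContDiff ℝ 2 f)
    (hM : ∀ t, |deriv (deriv f) t| ≤ M) {ε y : ℝ} (hε : 0 ≤ ε) (hy : |y| ≤ 1 / 2) (c : ℝ) :
    |f (c + ε * y) -
        ∫ z in (-(1:ℝ)/2)..(1/2), (f (c + ε * z) + ε * (y * deriv f (c + ε * z)))|
      ≤ M * ε ^ 2 := by
  have hf₀ : Continuous f := hf.continuous
  have hf₁ : Continuous (deriv f) := (hf.iterate_deriv' 1 1).continuous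
  have hmean : ∫ z in (-(1:ℝ)/2)..(1/2), (f (c + ε * y) + ε * deriv f (c + ε * y) * z)
      = f (c + ε * y) := by
    rw [intervalIntegral.integral_add intervalIntegrable_const
      (intervalIntegrable_id.const_mul _), intervalIntegral.integral_const,
      intervalIntegral.integral_const_mul, integral_id]
    norm_num
  have hcell : Continuous fun z => f (c + ε * z) + ε * (y * deriv f (c + ε * z)) := by
    fun_prop
  have hlin : Continuous fun z : ℝ => f (c + ε * y) + ε * deriv f (c + ε * y) * z := by
    fun_prop
  rw [← hmean, ← intervalIntegral.integral_sub (hlin.intervalIntegrable _ _)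
    (hcell.intervalIntegrable _ _), ← Real.norm_eq_abs]
  refine (intervalIntegral.norm_integral_le_of_norm_le_const (C := M * ε ^ 2)
    fun z hz => ?_).trans_eq (by norm_num)
  rw [uIoc_of_le (by norm_num)] at hz
  exact abs_first_order_cell_error_le hf hM hε hy (abs_le.2 ⟨by linarith [hz.1], hz.2⟩) c

end CellAverage

theorem regOp_first_order_approx_general (v : ℝ → ℝ → ℝ)
    (hper : ∀ x y : ℝ, v x (y + 1) = v x y)
    (hsmooth : ∀ y : ℝ, ContDiff ℝ 2 (fun x => v x y))
    (M : ℝ)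
    (hd2 : ∀ x y : ℝ, |pdx (pdx v) x y| ≤ M)
    (ε : ℝ) (hε : 0 < ε) (x : ℝ) :
    |regOp ε v x -
        twoScaleAdj ε (fun x y => v x y + ε * (y * pdx v x y)) x| ≤ M * ε ^ 2 := by
  have h := abs_sub_integral_first_order_le (hsmooth (yEps ε x)) (hd2 · (yEps ε x)) hε.le
    (abs_yEps_le ε x) (cEps ε x)
  rwa [cEps_add_mul_yEps hε.ne', ← regOp_eq_yEps hper] at h

/-- First-order approximation of the regularization operator
(pointwise form of Lemma "Approx B"):
`B_ε v = T_ε*(v + ε y·∇ₓ v) + ε·O(ε)`. -/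
theorem regOp_first_order_approx (v : ℝ → ℝ → ℝ)
    (hper : ∀ x y : ℝ, v x (y + 1) = v x y)
    (hsmooth : ∀ y : ℝ, ContDiff ℝ 2 (fun x => v x y))
    (M : ℝ)
    (hd1 : ∀ x y : ℝ, |pdx v x y| ≤ M)
    (hd2 : ∀ x y : ℝ, |pdx (pdx v) x y| ≤ M)
    (ε : ℝ) (hε : 0 < ε) (x : ℝ) :
    |regOp ε v x -
        twoScaleAdj ε (fun x y => v x y + ε * (y * pdx v x y)) x| ≤ M * ε ^ 2 :=
  regOp_first_order_approx_general v hper hsmooth M hd2 ε hε x
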